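/- If G is a three-edge connected planar embedded multigraph without self-loops, then every 3EC slice of G is three-edge connected. -/

import Mathlib

/-! Preamble: finite multigraphs, connectivity, closed walks, contractions,
planar embeddings, levels, double layers, slices, branch decompositions. -/

structure Multigraph : Type 1 where
  V : Type
  E : Type
  fintypeV : Fintype V
  fintypeE : Fintype E
  decEqV : DecidableEq V
  decEqE : DecidableEq E
  ends : E → Sym2 V

attribute [instance] Multigraph.fintypeV Multigraph.fintypeE
attribute [instance] Multigraph.decEqV Multigraph.decEqE

namespace Multigraph

variable (G : Multigraph)

/-- Reachability inside the vertex set `A`, using only edges in `S`. -/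
def Reach (A : Set G.V) (S : Set G.E) : G.V → G.V → Prop :=
  Relation.ReflTransGen (fun a b => a ∈ A ∧ b ∈ A ∧ ∃ e ∈ S, G.ends e = s(a, b))

/-- The subgraph with vertex set `A` and the edges of `S` (restricted to `A`)
is connected. -/
def ConnectedOn (A : Set G.V) (S : Set G.E) : Prop :=
  ∀ u ∈ A, ∀ v ∈ A, G.Reach A S u v

def Connected : Prop := G.ConnectedOn Set.univ Set.univ

/-- `G` remains connected after deleting any `k - 1` edges. -/
def EdgeConn (k : ℕ) : Prop :=
  ∀ F : Finset G.E, F.card < k → G.ConnectedOn Set.univ (↑F)ᶜ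

/-- `G` remains connected after deleting any `k - 1` vertices. -/
def VertexConn (k : ℕ) : Prop :=
  ∀ W : Finset G.V, W.card < k → G.ConnectedOn (↑W)ᶜ Set.univ

/-- The spanning subgraph of `G` with edge set `S` is `k`-edge connected. -/
def EdgeConnSub (S : Set G.E) (k : ℕ) : Prop :=
  ∀ F : Finset G.E, F.card < k → G.ConnectedOn Set.univ (S \ ↑F)

/-- The spanning subgraph of `G` with edge set `S` is `k`-vertex connected. -/
def VertexConnSub (S : Set G.E) (k : ℕ) : Prop :=
  ∀ W : Finset G.V, W.card < k → G.ConnectedOn (↑W)ᶜ S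

def Loopless : Prop := ∀ e : G.E, ¬ (G.ends e).IsDiag

def Simple : Prop := G.Loopless ∧ ∀ e e' : G.E, G.ends e = G.ends e' → e = e'

/-- At most `m` parallel edges between any pair of vertices. -/
def ParallelBound (m : ℕ) : Prop := ∀ p : Sym2 G.V, {e : G.E | G.ends e = p}.ncard ≤ m

def AdjV (u v : G.V) : Prop := ∃ e : G.E, G.ends e = s(u, v)

/-- `H` is a connected component of the subgraph induced by `A`. -/
def IsCompOf (A H : Set G.V) : Prop :=
  ∃ u ∈ A, H = {v | v ∈ A ∧ G.Reach A Set.univ u v}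

end Multigraph

/-! ### Closed walks, circuits and simple cycles -/

structure ClosedWalk (G : Multigraph) where
  n : ℕ
  npos : 0 < n
  vert : ℕ → G.V
  edge : ℕ → G.E
  ends_eq : ∀ i < n, G.ends (edge i) = s(vert i, vert (i + 1))
  closed : vert n = vert 0

namespace ClosedWalk

variable {G : Multigraph} (C : ClosedWalk G)

def edgeSet : Set G.E := {e | ∃ i < C.n, C.edge i = e}

def vertexSet : Set G.V := {v | ∃ i < C.n, C.vert i = v}

/-- A circuit: a closed walk with no repeated edge. -/
def IsCircuit : Prop := ∀ i < C.n, ∀ j < C.n, C.edge i = C.edge j → i = j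

/-- A simple cycle: a circuit with no repeated vertex. -/
def IsSimpleCycle : Prop :=
  C.IsCircuit ∧ ∀ i < C.n, ∀ j < C.n, C.vert i = C.vert j → i = j

end ClosedWalk

namespace Multigraph

variable (G : Multigraph)

/-- `C` is a maximal circuit among the circuits with all edges in `S`. -/
def IsMaxCircuitIn (S : Set G.E) (C : ClosedWalk G) : Prop :=
  C.IsCircuit ∧ C.edgeSet ⊆ S ∧
    ∀ C' : ClosedWalk G, C'.IsCircuit → C'.edgeSet ⊆ S →
      C.edgeSet ⊆ C'.edgeSet → C'.edgeSet ⊆ C.edgeSet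

/-- `C` is a simple cycle all of whose edges lie in `S`. -/
def IsSimpleCycleIn (S : Set G.E) (C : ClosedWalk G) : Prop :=
  C.IsSimpleCycle ∧ C.edgeSet ⊆ S

/-! ### Contractions -/

/-- Identify all vertices in `S` to a single vertex. -/
def contractSetoid (S : Set G.V) : Setoid G.V where
  r a b := a = b ∨ (a ∈ S ∧ b ∈ S)
  iseqv := by
    refine ⟨fun x => Or.inl rfl, ?_, ?_⟩
    · rintro x y (rfl | ⟨hx, hy⟩)
      · exact Or.inl rfl
      · exact Or.inr ⟨hy, hx⟩
    · rintro x y z (rfl | ⟨hx, hy⟩) h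
      · exact h
      · rcases h with rfl | ⟨hy', hz⟩
        · exact Or.inr ⟨hx, hy⟩
        · exact Or.inr ⟨hx, hz⟩

/-- The graph obtained from `G` by contracting the vertex set `S` to one
vertex, deleting the resulting self-loops. -/
noncomputable def contractSet (S : Set G.V) : Multigraph where
  V := Quotient (G.contractSetoid S)
  E := {e : G.E // ¬ (Sym2.map (Quotient.mk (G.contractSetoid S)) (G.ends e)).IsDiag}
  fintypeV := Fintype.ofFinite _
  fintypeE := Fintype.ofFinite _
  decEqV := Classical.decEq _
  decEqE := Classical.decEq _
  ends := fun e => Sym2.map (Quotient.mk (G.contractSetoid S)) (G.ends e.1)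

end Multigraph

namespace Multigraph

variable (G : Multigraph)

/-- Identify the vertices of each connected component of `G ∖ U`. -/
def outsideSetoid (U : Set G.V) : Setoid G.V where
  r a b := a = b ∨ (a ∉ U ∧ b ∉ U ∧ G.Reach Uᶜ Set.univ a b)
  iseqv := by
    refine ⟨fun x => Or.inl rfl, ?_, ?_⟩
    · rintro x y (rfl | ⟨hx, hy, hr⟩)
      · exact Or.inl rfl
      · refine Or.inr ⟨hy, hx, ?_⟩
        refine @Std.Symm.symm _ _ (@Relation.ReflTransGen.stdSymm _ _ ⟨?_⟩) _ _ hr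
        rintro a b ⟨ha, hb, e, he, hse⟩
        exact ⟨hb, ha, e, he, by rw [hse, Sym2.eq_swap]⟩
    · rintro x y z (rfl | ⟨hx, hy, hxy⟩) h
      · exact h
      · rcases h with rfl | ⟨hy', hz, hyz⟩
        · exact Or.inr ⟨hx, hy, hxy⟩
        · exact Or.inr ⟨hx, hz, hxy.trans hyz⟩

/-- The graph obtained from `G` by contracting each connected component of
`G ∖ U` to a single node, deleting the resulting self-loops. -/
noncomputable def contractOutside (U : Set G.V) : Multigraph where
  V := Quotient (G.outsideSetoid U)
  E := {e : G.E // ¬ (Sym2.map (Quotient.mk (G.outsideSetoid U)) (G.ends e)).IsDiag}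
  fintypeV := Fintype.ofFinite _
  fintypeE := Fintype.ofFinite _
  decEqV := Classical.decEq _
  decEqE := Classical.decEq _
  ends := fun e => Sym2.map (Quotient.mk (G.outsideSetoid U)) (G.ends e.1)

/-- An (arbitrary, fixed) numbering of the edges of `G`. -/
noncomputable def edgeIdx (e : G.E) : ℕ := ((Fintype.equivFin G.E) e : ℕ)

/-- Delete parallel edges so that at most `m` parallel edges remain between
any pair of vertices (keeping, in each parallel class, the `m` edges of
smallest index). -/
noncomputable def trim (m : ℕ) : Multigraph where
  V := G.V
  E := {e : G.E // {e' : G.E | G.ends e' = G.ends e ∧ G.edgeIdx e' < G.edgeIdx e}.ncard < m}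
  fintypeV := G.fintypeV
  fintypeE := Fintype.ofFinite _
  decEqV := G.decEqV
  decEqE := Classical.decEq _
  ends := fun e => G.ends e.1

end Multigraph

/-! ### Planar embeddings, levels and slices -/

/-- A planar embedding of the multigraph `G`: vertices are points of the
plane and edges are arcs joining thir endpoints, arcs being internally
disjoint from each other and from the vertices. -/
structure Multigraph.PlanarEmb (G : Multigraph) where
  vpos : G.V → ℝ × ℝ
  arc : G.E → ℝ → ℝ × ℝ
  vpos_inj : Function.Injective vpos
  arc_cont : ∀ e, ContinuousOn (arc e) (Set.Icc 0 1)
  arc_ends : ∀ e, Sym2.map vpos (G.ends e) = s(arc e 0, arc e 1)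
  arc_inj : ∀ e, ∀ t ∈ Set.Ioo (0:ℝ) 1, ∀ u ∈ Set.Icc (0:ℝ) 1, arc e t = arc e u → t = u
  arc_avoid_vert : ∀ e, ∀ t ∈ Set.Ioo (0:ℝ) 1, arc e t ∉ Set.range vpos
  arcs_disj : ∀ e e', e ≠ e' → ∀ t ∈ Set.Ioo (0:ℝ) 1, ∀ u ∈ Set.Icc (0:ℝ) 1,
    arc e t ≠ arc e' u

/-- `G` is planar: it admits a planar embedding. -/
def Multigraph.Planar (G : Multigraph) : Prop := Nonempty G.PlanarEmb

/-- A Jordan curve `J` (together with the closed disk it bounds) encloses the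
point `p`. -/
def JordanEncloses (J : Set (ℝ × ℝ)) (p : ℝ × ℝ) : Prop :=
  p ∈ J ∨ (p ∉ J ∧ Bornology.IsBounded (connectedComponentIn Jᶜ p))

namespace Multigraph.PlanarEmb

variable {G : Multigraph} (emb : G.PlanarEmb)

/-- The image in the plane of the subgraph of `G` induced by `A`. -/
def image (A : Set G.V) : Set (ℝ × ℝ) :=
  emb.vpos '' A ∪ ⋃ e ∈ {e : G.E | ∀ v ∈ G.ends e, v ∈ A}, emb.arc e '' Set.Icc 0 1

/-- `p` is a point of the outer (infinite) face of the subgraph of `G`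
induced by `A`. -/
def OuterPt (A : Set G.V) (p : ℝ × ℝ) : Prop :=
  p ∉ emb.image A ∧ ¬ Bornology.IsBounded (connectedComponentIn (emb.image A)ᶜ p)

/-- The vertex `v ∈ A` lies on the outer face of the subgraph of `G` induced
by `A`. -/
def OnOuter (A : Set G.V) (v : G.V) : Prop :=
  v ∈ A ∧ emb.vpos v ∈ closure {p | emb.OuterPt A p}

/-- `V_i`: the set of vertices of level `i`; a vertex has level `i` if it lies
on the outer face after all vertices of smaller levels have been deleted. -/
def levelSet : ℕ → Set G.V
  | i => {v | emb.OnOuter {w | ∀ j, j < i → w ∉ levelSet j} v}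
  termination_by i => i
  decreasing_by assumption

/-- The edges of `∂(G[A])`: edges of the subgraph induced by `A` lying on its
outer boundary. -/
def boundarySet (A : Set G.V) : Set G.E :=
  {e | (∀ v ∈ G.ends e, v ∈ A) ∧
    emb.arc e '' Set.Icc 0 1 ⊆ closure {p | emb.OuterPt A p}}

/-- The curve in the plane traced by a closed walk. -/
def curveOf (C : ClosedWalk G) : Set (ℝ × ℝ) :=
  {p | ∃ i < C.n, p ∈ emb.arc (C.edge i) '' Set.Icc 0 1}

/-- A closed walk encloses the point `p` if some simple cycle contained in it
does. -/
def EnclosesPt (C : ClosedWalk G) (p : ℝ × ℝ) : Prop :=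
  ∃ C' : ClosedWalk G, C'.IsSimpleCycle ∧ C'.edgeSet ⊆ C.edgeSet ∧
    JordanEncloses (emb.curveOf C') p

def EnclosesV (C : ClosedWalk G) (v : G.V) : Prop := emb.EnclosesPt C (emb.vpos v)

end Multigraph.PlanarEmb

/-- `f(i) = max (i·k − k + t) 0`. -/
def fIdx (k t i : ℕ) : ℕ := i * k + t - k

namespace Multigraph.PlanarEmb

variable {G : Multigraph} (emb : G.PlanarEmb)

/-- The set of edges with one endpoint of level `a` and the other of level `b`. -/
def ebtw (a b : ℕ) : Set G.E :=
  {e | ∃ u v, G.ends e = s(u, v) ∧ u ∈ emb.levelSet a ∧ v ∈ emb.levelSet b}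

/-- The `i`-th double layer `D_i = E_{i−1,i} ∪ E_i ∪ E_{i,i+1} ∪ E_{i+1}`. -/
def dlayer (i : ℕ) : Set G.E :=
  emb.ebtw (i - 1) i ∪ emb.ebtw i i ∪ emb.ebtw i (i + 1) ∪ emb.ebtw (i + 1) (i + 1)

/-- `R_j = ⋃_{i ≡ j mod k} D_i`. -/
def rset (k j : ℕ) : Set G.E := ⋃ i ∈ {i : ℕ | i % k = j}, emb.dlayer i

/-- The edge set of `H_i`: the subgraph induced by the vertices of levels
`f(i)−1` through `f(i+1)+1`, minus the edges of `E_{f(i)−1}`. -/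
def hiEdges (k t i : ℕ) : Set G.E :=
  {e | ∀ v ∈ G.ends e, ∃ j : ℕ, (fIdx k t i : ℤ) - 1 ≤ (j : ℤ) ∧
      (j : ℤ) ≤ (fIdx k t (i + 1) : ℤ) + 1 ∧ v ∈ emb.levelSet j} \
  {e | ∀ v ∈ G.ends e, ∃ j : ℕ, (j : ℤ) = (fIdx k t i : ℤ) - 1 ∧ v ∈ emb.levelSet j}

/-- The vertices of `H_i` outside `V_{f(i)−1} ∪ V_{f(i+1)+1}` enclosed by the
circuit `Ca`. -/
def sliceU (k t i : ℕ) (Ca : ClosedWalk G) : Set G.V :=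
  {v | (∃ j, fIdx k t i ≤ j ∧ j ≤ fIdx k t (i + 1) ∧ v ∈ emb.levelSet j) ∧
    emb.EnclosesV Ca v}

/-- The 3EC slice `H_i^a`: contract every connected component of `G ∖ U` and
keep at most 3 parallel edges between any pair of vertices. -/
noncomputable def slice3EC (k t i : ℕ) (Ca : ClosedWalk G) : Multigraph :=
  (G.contractOutside (emb.sliceU k t i Ca)).trim 3

/-- The 3VC slice `H_i^a`: contract every connected component of `G ∖ U` and
delete all parallel edges. -/
noncomputable def slice3VC (k t i : ℕ) (Ca : ClosedWalk G) : Multigraph :=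
  (G.contractOutside (emb.sliceU k t i Ca)).trim 1

/-- The edge of `G` underlying an edge of a 3EC slice. -/
noncomputable def sliceEdge3EC (k t i : ℕ) (Ca : ClosedWalk G) :
    (emb.slice3EC k t i Ca).E → G.E := fun e => e.1.1

/-- The edge of `G` underlying an edge of a 3VC slice. -/
noncomputable def sliceEdge3VC (k t i : ℕ) (Ca : ClosedWalk G) :
    (emb.slice3VC k t i Ca).E → G.E := fun e => e.1.1

end Multigraph.PlanarEmb

/-! ### Branch decompositions and branchwidth -/

inductive BTree (α : Type) : Type
  | leaf : α → BTree α
  | node : BTree α → BTree α → BTree α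

namespace BTree

variable {α : Type}

def leaves : BTree α → List α
  | .leaf a => [a]
  | .node l r => l.leaves ++ r.leaves

def subtrees : BTree α → List (BTree α)
  | .leaf a => [.leaf a]
  | .node l r => .node l r :: (l.subtrees ++ r.subtrees)

end BTree

/-- The size of the separator associated with the edge bipartition
`(E₁, E(G) ∖ E₁)`: the number of vertices incident to edges of both parts. -/
noncomputable def Multigraph.sepSize (G : Multigraph) (E₁ : Set G.E) : ℕ :=
  {v : G.V | (∃ e ∈ E₁, v ∈ G.ends e) ∧ ∃ e ∉ E₁, v ∈ G.ends e}.ncard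

/-- `G` has branchwidth at most `w`: some branch decomposition (a binary tree
whose leaves are in bijection with `E(G)`) has all its separators of size at
most `w`. -/
noncomputable def Multigraph.BranchWidthLE (G : Multigraph) (w : ℕ) : Prop :=
  IsEmpty G.E ∨ ∃ T : BTree G.E, T.leaves.Nodup ∧ (∀ e : G.E, e ∈ T.leaves) ∧
    ∀ S ∈ T.subtrees, G.sepSize {e | e ∈ S.leaves} ≤ w



/-! Contracting vertex sets and thinning parallel classes to at least three edges both
preserve three-edge connectivity: a path of the slice avoiding two of its edges is the
image of a path of `G` avoiding the underlying two edges, with every edge of `G` that was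
removed as a parallel copy replaced by a surviving copy. -/

namespace Multigraph

variable {G H : Multigraph}

def EdgesMapTo (G H : Multigraph) (φ : G.V → H.V) (S : Set G.E) (T : Set H.E) : Prop :=
  ∀ e ∈ S, ∀ c d, G.ends e = s(c, d) → φ c = φ d ∨ ∃ e' ∈ T, H.ends e' = s(φ c, φ d)

theorem Reach.map {φ : G.V → H.V} {S : Set G.E} {T : Set H.E} (hφ : EdgesMapTo G H φ S T)
    {a b : G.V} (h : G.Reach Set.univ S a b) : H.Reach Set.univ T (φ a) (φ b) := by
  refine Relation.ReflTransGen.lift' φ (fun c d ⟨_, _, e, he, hends⟩ => ?_) _ _ h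
  change Relation.ReflTransGen _ (φ c) (φ d)
  rcases hφ e he c d hends with hcd | ⟨e', he', hends'⟩
  · rw [hcd]
  · exact .single ⟨trivial, trivial, e', he', hends'⟩

theorem EdgeConn.of_surjective {k : ℕ} (hG : G.EdgeConn k) {φ : G.V → H.V}
    (hφ : Function.Surjective φ)
    (hlift : ∀ F : Finset H.E, F.card < k →
      ∃ F' : Finset G.E, F'.card < k ∧ EdgesMapTo G H φ (↑F')ᶜ (↑F)ᶜ) :
    H.EdgeConn k := by
  intro F hF u _ v _
  obtain ⟨a, rfl⟩ := hφ u
  obtain ⟨b, rfl⟩ := hφ v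
  obtain ⟨F', hF', hφF⟩ := hlift F hF
  exact Reach.map hφF (hG F' hF' a trivial b trivial)

theorem edgeConn_contractOutside {k : ℕ} (hG : G.EdgeConn k) (U : Set G.V) :
    (G.contractOutside U).EdgeConn k := by
  refine hG.of_surjective Quotient.mk_surjective fun F hF =>
    ⟨F.image Subtype.val, Finset.card_image_le.trans_lt hF, ?_⟩
  intro e he c d hends
  by_cases hdiag : (Sym2.map (Quotient.mk (G.outsideSetoid U)) (G.ends e)).IsDiag
  · rw [hends, Sym2.map_mk, Sym2.mk_isDiag_iff] at hdiag
    exact .inl hdiag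
  · refine .inr ⟨⟨e, hdiag⟩, fun heF => he (Finset.mem_image_of_mem _ heF), ?_⟩
    change Sym2.map _ (G.ends e) = _
    rw [hends, Sym2.map_mk]
    rfl

/-- The parallel copy of least index outside `F` survives in `G.trim m` as soon as
`|F| < m`, since all copies of smaller index lie in `F`. -/
theorem exists_trim_edge_not_mem {m : ℕ} {F : Finset G.E} (hF : F.card < m) {e : G.E}
    (he : e ∉ F) : ∃ e' : (G.trim m).E, e'.1 ∉ F ∧ G.ends e'.1 = G.ends e := by
  classical
  let S := Finset.univ.filter fun x => G.ends x = G.ends e ∧ x ∉ F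
  obtain ⟨e₀, he₀S, hmin⟩ :=
    S.exists_min_image G.edgeIdx ⟨e, Finset.mem_filter.2 ⟨Finset.mem_univ _, rfl, he⟩⟩
  obtain ⟨-, hends₀, he₀F⟩ := Finset.mem_filter.1 he₀S
  have hsmaller : {x | G.ends x = G.ends e₀ ∧ G.edgeIdx x < G.edgeIdx e₀} ⊆ ↑F := by
    rintro x ⟨hx, hlt⟩
    by_contra hxF
    exact (hmin x (Finset.mem_filter.2 ⟨Finset.mem_univ _, hx.trans hends₀, hxF⟩)).not_gt hlt
  have hcard := (Set.ncard_le_ncard hsmaller F.finite_toSet).trans_lt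
    ((Set.ncard_coe_finset F).trans_lt hF)
  exact ⟨⟨e₀, hcard⟩, he₀F, hends₀⟩

theorem edgeConn_trim {k m : ℕ} (hkm : k ≤ m) (hG : G.EdgeConn k) : (G.trim m).EdgeConn k := by
  refine hG.of_surjective (φ := id) Function.surjective_id fun F hF =>
    ⟨F.image Subtype.val, Finset.card_image_le.trans_lt hF, ?_⟩
  intro e he c d hends
  obtain ⟨e', he'F, hends'⟩ :=
    exists_trim_edge_not_mem (Finset.card_image_le.trans_lt (hF.trans_le hkm)) he
  exact .inr ⟨e', fun h => he'F (Finset.mem_image_of_mem _ h), hends'.trans hends⟩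

end Multigraph

theorem slice3EC_threeEdgeConnected_general (G : Multigraph) (emb : G.PlanarEmb)
    (hG : G.EdgeConn 3) (k t : ℕ) (i : ℕ) (Ca : ClosedWalk G) :
    (emb.slice3EC k t i Ca).EdgeConn 3 :=
  Multigraph.edgeConn_trim le_rfl (Multigraph.edgeConn_contractOutside hG _)

/-- If `G` is a three-edge connected planar embedded
multigraph without self-loops, then every 3EC slice of `G` is three-edge
connected. -/
theorem slice3EC_threeEdgeConnected (G : Multigraph) (emb : G.PlanarEmb)
    (hloop : G.Loopless) (hG : G.EdgeConn 3) (k t : ℕ) (hk : 2 ≤ k)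
    (ht : t < k) (i : ℕ) (Ca : ClosedWalk G)
    (hCa : G.IsMaxCircuitIn (emb.boundarySet (emb.levelSet (fIdx k t i))) Ca) :
    (emb.slice3EC k t i Ca).EdgeConn 3 :=
  slice3EC_threeEdgeConnected_general G emb hG k t i Ca
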